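/- arXiv:2602.13467 — 4 statements merged into one kernel-verified Lean document; each statement's English description precedes it below -/
import Mathlib

section
/- Let P be a finite poset and let P₁, P₂ ⊆ P be subposets such that (1) P₁ ∪ P₂ = P; (2) P₁ ∩ P₂ is contained in the set of minimal elements of P or contained in the set of maximal elements of P; and (3) whenever x ∈ P₁ and y ∈ P₂ satisfy x ≺ y or y ≺ x, then x ∈ P₁ ∩ P₂ or y ∈ P₁ ∩ P₂. Then the nilpotent Lie poset algebra g^≺(P) is isomorphic as a Lie algebra to the direct sum g^≺(P₁) ⊕ g^≺(P₂). -/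
noncomputable section

attribute [local instance 100] LieRing.ofAssociativeRing

/-- The nilpotent Lie poset algebra `g^≺(P)` of a finite poset: the Lie subalgebra of matrices
indexed by `P` spanned by the `E_{p,q}` with `p ≺ q`. -/
def posetAlg (α : Type*) [Fintype α] [DecidableEq α] [PartialOrder α] :
    LieSubalgebra ℂ (Matrix α α ℂ) :=
  LieSubalgebra.lieSpan ℂ _ {M | ∃ p q : α, p < q ∧ M = Matrix.single p q 1}

section Prod

variable (L₁ L₂ : Type*) [LieRing L₁] [LieRing L₂] [LieAlgebra ℂ L₁] [LieAlgebra ℂ L₂]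

/-- Componentwise bracket on the direct sum `L₁ ⊕ L₂`. -/
instance prodBracket : Bracket (L₁ × L₂) (L₁ × L₂) :=
  ⟨fun x y => (⁅x.1, y.1⁆, ⁅x.2, y.2⁆)⟩

/-- The direct sum of two Lie rings, with componentwise bracket. -/
instance prodLieRing : LieRing (L₁ × L₂) where
  add_lie x y z := by rw [Prod.ext_iff]; constructor <;> exact add_lie _ _ _
  lie_add x y z := by rw [Prod.ext_iff]; constructor <;> exact lie_add _ _ _
  lie_self x := by rw [Prod.ext_iff]; constructor <;> exact lie_self _
  leibniz_lie x y z := by rw [Prod.ext_iff]; constructor <;> exact leibniz_lie _ _ _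

/-- The direct sum of two Lie algebras. -/
instance prodLieAlgebra : LieAlgebra ℂ (L₁ × L₂) where
  lie_smul t x y := by rw [Prod.ext_iff]; constructor <;> exact lie_smul _ _ _

end Prod

/-! Restricting a matrix to the index sets `P₁` and `P₂` is the isomorphism. The hypotheses say
that every relation `p < q` of `P` has both ends in exactly one of `P₁`, `P₂`. Hence each `Pᵢ` is
order-convex, so in `(M * N) p q = ∑ₖ M p k * N k q` with `p, q ∈ Pᵢ` only `k ∈ Pᵢ` contribute
and restriction is multiplicative; a strictly triangular matrix is determined by its two
restrictions, and the sum of the zero-extensions of a pair of restrictions inverts the map. -/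

theorem Matrix.mul_apply_eq_zero_of_not_lt {R α : Type*} [NonUnitalNonAssocSemiring R]
    [Fintype α] [Preorder α]
    {M N : Matrix α α R} (hM : ∀ p q, ¬ p < q → M p q = 0) (hN : ∀ p q, ¬ p < q → N p q = 0)
    {p q : α} (hpq : ¬ p < q) : (M * N) p q = 0 := by
  rw [Matrix.mul_apply]
  refine Finset.sum_eq_zero fun k _ => ?_
  by_cases hpk : p < k
  · rw [hN k q fun hkq => hpq (hpk.trans hkq), mul_zero]
  · rw [hM p k hpk, zero_mul]

section StrictTriangular

variable (R : Type*) [CommRing R] (α : Type*) [Fintype α] [DecidableEq α] [Preorder α]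

def strictTriangular : LieSubalgebra R (Matrix α α R) where
  carrier := {M | ∀ p q, ¬ p < q → M p q = 0}
  add_mem' hM hN p q h := by simp [hM p q h, hN p q h]
  zero_mem' _ _ _ := rfl
  smul_mem' c _ hM p q h := by simp [hM p q h]
  lie_mem' {M N} hM hN p q h := by
    rw [Ring.lie_def, Matrix.sub_apply, Matrix.mul_apply_eq_zero_of_not_lt hM hN h,
      Matrix.mul_apply_eq_zero_of_not_lt hN hM h, sub_zero]

end StrictTriangular

theorem posetAlg_eq_strictTriangular (α : Type*) [Fintype α] [DecidableEq α] [PartialOrder α] :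
    posetAlg α = strictTriangular ℂ α := by
  refine le_antisymm (LieSubalgebra.lieSpan_le.2 ?_) fun M hM => ?_
  · rintro _ ⟨p, q, hpq, rfl⟩ a b hab
    refine Matrix.single_apply_of_ne _ _ _ _ _ ?_
    rintro ⟨rfl, rfl⟩
    exact hab hpq
  · rw [Matrix.matrix_eq_sum_single M]
    refine sum_mem fun p _ => sum_mem fun q _ => ?_
    by_cases hpq : p < q
    · rw [← mul_one (M p q), ← smul_eq_mul, ← Matrix.smul_single]
      exact LieSubalgebra.smul_mem _ _ (LieSubalgebra.subset_lieSpan ⟨p, q, hpq, rfl⟩)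
    · rw [hM p q hpq, Matrix.single_zero]
      exact zero_mem _

section Restriction

variable {R : Type*} [CommRing R] {α : Type*} [Fintype α] [DecidableEq α] [Preorder α]
  (S : Set α) [Fintype S]

theorem Matrix.submatrix_mul_of_ordConnected [S.OrdConnected] {M N : Matrix α α R}
    (hM : M ∈ strictTriangular R α) (hN : N ∈ strictTriangular R α) :
    (M * N).submatrix ((↑) : S → α) ((↑) : S → α) =
      M.submatrix ((↑) : S → α) ((↑) : S → α) * N.submatrix ((↑) : S → α) ((↑) : S → α) := by
  classical
  ext p q
  simp only [Matrix.submatrix_apply, Matrix.mul_apply]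
  rw [← Finset.sum_subtype S.toFinset (fun _ => Set.mem_toFinset) fun k => M p k * N k q]
  refine (Finset.sum_subset (Finset.subset_univ _) fun k _ hk => ?_).symm
  by_cases hpk : (p : α) < k
  · by_cases hkq : k < (q : α)
    · exact absurd (Set.mem_toFinset.2 (S.Icc_subset p.2 q.2 ⟨hpk.le, hkq.le⟩)) hk
    · rw [hN k q hkq, mul_zero]
  · rw [hM p k hpk, zero_mul]

def strictTriangular.restrict [S.OrdConnected] :
    strictTriangular R α →ₗ⁅R⁆ strictTriangular R S where
  toFun M := ⟨(M : Matrix α α R).submatrix (↑) (↑), fun p q h => M.2 p q (by simpa using h)⟩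
  map_add' _ _ := rfl
  map_smul' _ _ := rfl
  map_lie' {M N} := Subtype.ext <| by
    simp only [LieSubalgebra.coe_bracket, Ring.lie_def, Matrix.submatrix_sub, Pi.sub_apply]
    rw [Matrix.submatrix_mul_of_ordConnected S M.2 N.2, Matrix.submatrix_mul_of_ordConnected S N.2 M.2]

end Restriction

section ExtendByZero

variable {R : Type*} {α : Type*}

open Classical in
def Matrix.extendByZero [Zero R] (S : Set α) (A : Matrix S S R) : Matrix α α R :=
  Matrix.of fun p q => if h : p ∈ S ∧ q ∈ S then A ⟨p, h.1⟩ ⟨q, h.2⟩ else 0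

@[simp]
theorem Matrix.submatrix_extendByZero [Zero R] {S : Set α} (A : Matrix S S R) :
    (A.extendByZero S).submatrix ((↑) : S → α) ((↑) : S → α) = A := by
  ext p q
  simp [Matrix.extendByZero]

variable [CommRing R] [DecidableEq α] [Preorder α] {S T : Set α}

theorem Matrix.extendByZero_mem_strictTriangular [Fintype α] [Fintype S] {A : Matrix S S R}
    (hA : A ∈ strictTriangular R S) : A.extendByZero S ∈ strictTriangular R α := by
  intro p q hpq
  simp only [Matrix.extendByZero, Matrix.of_apply]
  split_ifs with h
  · exact hA _ _ hpq
  · rfl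

theorem Matrix.submatrix_extendByZero_eq_zero [Fintype T] {B : Matrix T T R}
    (hB : B ∈ strictTriangular R T)
    (hST : ∀ ⦃p q : α⦄, p < q → p ∈ S → q ∈ S → ¬ (p ∈ T ∧ q ∈ T)) :
    (B.extendByZero T).submatrix ((↑) : S → α) ((↑) : S → α) = 0 := by
  ext p q
  simp only [Matrix.extendByZero, Matrix.submatrix_apply, Matrix.of_apply, Matrix.zero_apply]
  split_ifs with h
  · exact hB _ _ fun hpq => hST (Subtype.coe_lt_coe.2 hpq) p.2 q.2 h
  · rfl

end ExtendByZero

section Splitting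

variable {α : Type*} [PartialOrder α] {P₁ P₂ : Set α}

def SplitsRelations (P₁ P₂ : Set α) : Prop :=
  ∀ ⦃p q : α⦄, p < q → Xor (p ∈ P₁ ∧ q ∈ P₁) (p ∈ P₂ ∧ q ∈ P₂)

theorem SplitsRelations.symm (h : SplitsRelations P₁ P₂) : SplitsRelations P₂ P₁ :=
  fun _ _ hpq => xor_comm _ _ ▸ h hpq

theorem SplitsRelations.notMem_right (h : SplitsRelations P₁ P₂) ⦃p q : α⦄ (hpq : p < q)
    (hp : p ∈ P₁) (hq : q ∈ P₁) : ¬ (p ∈ P₂ ∧ q ∈ P₂) := by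
  have := h hpq
  unfold Xor at this
  tauto

theorem SplitsRelations.ordConnected_left (h : SplitsRelations P₁ P₂) : P₁.OrdConnected := by
  refine ⟨fun p hp q hq k ⟨hpk, hkq⟩ => ?_⟩
  obtain hpk | rfl := hpk.lt_or_eq
  · obtain hkq | rfl := hkq.lt_or_eq
    -- `k ∉ P₁` would put both `p < k` and `k < q`, hence `p < q`, into `P₂`.
    · have hpk' := h hpk
      have hkq' := h hkq
      have := h.notMem_right (hpk.trans hkq) hp hq
      unfold Xor at hpk' hkq'
      tauto
    · exact hq
  · exact hp

variable {R : Type*} [CommRing R] [Fintype α] [DecidableEq α] [Fintype P₁] [Fintype P₂]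

def SplitsRelations.restrictProd (h : SplitsRelations P₁ P₂) :
    strictTriangular R α →ₗ⁅R⁆ strictTriangular R P₁ × strictTriangular R P₂ :=
  haveI := h.ordConnected_left
  haveI := h.symm.ordConnected_left
  (strictTriangular.restrict P₁).prod (strictTriangular.restrict P₂)

theorem SplitsRelations.injective_restrictProd (h : SplitsRelations P₁ P₂) :
    Function.Injective (h.restrictProd (R := R)) := by
  intro M N hMN
  ext p q
  by_cases hpq : p < q
  · rcases (h hpq).or with ⟨hp, hq⟩ | ⟨hp, hq⟩
    · exact congrArg (fun x => (x.1 : Matrix P₁ P₁ R) ⟨p, hp⟩ ⟨q, hq⟩) hMN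
    · exact congrArg (fun x => (x.2 : Matrix P₂ P₂ R) ⟨p, hp⟩ ⟨q, hq⟩) hMN
  · rw [M.2 p q hpq, N.2 p q hpq]

theorem SplitsRelations.surjective_restrictProd (h : SplitsRelations P₁ P₂) :
    Function.Surjective (h.restrictProd (R := R)) := by
  rintro ⟨A, B⟩
  refine ⟨⟨A.1.extendByZero P₁ + B.1.extendByZero P₂, add_mem
    (Matrix.extendByZero_mem_strictTriangular A.2)
    (Matrix.extendByZero_mem_strictTriangular B.2)⟩, Prod.ext (Subtype.ext ?_) (Subtype.ext ?_)⟩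
  · change (A.1.extendByZero P₁ + B.1.extendByZero P₂).submatrix (↑) (↑) = A.1
    rw [Matrix.submatrix_add, Pi.add_apply, Pi.add_apply, Matrix.submatrix_extendByZero,
      Matrix.submatrix_extendByZero_eq_zero B.2 h.notMem_right, add_zero]
  · change (A.1.extendByZero P₁ + B.1.extendByZero P₂).submatrix (↑) (↑) = B.1
    rw [Matrix.submatrix_add, Pi.add_apply, Pi.add_apply, Matrix.submatrix_extendByZero,
      Matrix.submatrix_extendByZero_eq_zero A.2 h.symm.notMem_right, zero_add]

def SplitsRelations.strictTriangularEquiv (h : SplitsRelations P₁ P₂) :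
    strictTriangular R α ≃ₗ⁅R⁆ strictTriangular R P₁ × strictTriangular R P₂ :=
  .ofBijective h.restrictProd ⟨h.injective_restrictProd, h.surjective_restrictProd⟩

end Splitting

theorem SplitsRelations.of_union_eq_univ {α : Type*} [PartialOrder α] {P₁ P₂ : Set α}
    (h1 : P₁ ∪ P₂ = Set.univ)
    (h2 : (P₁ ∩ P₂ ⊆ {p | ∀ q, ¬ q < p}) ∨ (P₁ ∩ P₂ ⊆ {p | ∀ q, ¬ p < q}))
    (h3 : ∀ x ∈ P₁, ∀ y ∈ P₂, (x < y ∨ y < x) → x ∈ P₁ ∩ P₂ ∨ y ∈ P₁ ∩ P₂) :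
    SplitsRelations P₁ P₂ := by
  intro p q hpq
  have hp : p ∈ P₁ ∨ p ∈ P₂ := (h1 ▸ Set.mem_univ p :)
  have hq : q ∈ P₁ ∨ q ∈ P₂ := (h1 ▸ Set.mem_univ q :)
  have not_both : ¬ ((p ∈ P₁ ∧ p ∈ P₂) ∧ (q ∈ P₁ ∧ q ∈ P₂)) := fun ⟨hp, hq⟩ =>
    h2.elim (fun hmin => hmin hq p hpq) (fun hmax => hmax hp q hpq)
  have hpq₁₂ := fun hp hq => h3 p hp q hq (.inl hpq)
  have hqp₁₂ := fun hq hp => h3 q hq p hp (.inr hpq)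
  simp only [Set.mem_inter_iff] at hpq₁₂ hqp₁₂
  unfold Xor
  tauto

/-- If `P₁ ∪ P₂ = P`, `P₁ ∩ P₂` consists of minimal elements of `P` or consists of maximal
elements of `P`, and any strict relation between an element of `P₁` and an element of `P₂`
involves an element of `P₁ ∩ P₂`, then `g^≺(P) ≅ g^≺(P₁) ⊕ g^≺(P₂)` as Lie algebras. -/
theorem posetAlg_direct_sum (P : Type*) [Fintype P] [DecidableEq P] [PartialOrder P]
    (P₁ P₂ : Set P) [Fintype ↥P₁] [Fintype ↥P₂]
    (h1 : P₁ ∪ P₂ = Set.univ)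
    (h2 : (P₁ ∩ P₂ ⊆ {p | ∀ q, ¬ q < p}) ∨ (P₁ ∩ P₂ ⊆ {p | ∀ q, ¬ p < q}))
    (h3 : ∀ x ∈ P₁, ∀ y ∈ P₂, (x < y ∨ y < x) → x ∈ P₁ ∩ P₂ ∨ y ∈ P₁ ∩ P₂) :
    Nonempty (↥(posetAlg P) ≃ₗ⁅ℂ⁆ (↥(posetAlg ↥P₁) × ↥(posetAlg ↥P₂))) := by
  rw [posetAlg_eq_strictTriangular P, posetAlg_eq_strictTriangular P₁,
    posetAlg_eq_strictTriangular P₂]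
  exact ⟨(SplitsRelations.of_union_eq_univ h1 h2 h3).strictTriangularEquiv⟩
end
end

section
/- Let P be a finite poset and define, for p ∈ P, D(P,p) = #{q : q ≺ p} and U(P,p) = #{q : p ≺ q}, and let Ext(P) be the union of minimal and maximal elements of P. For the chained poset P(a₁,...,a_m) on [N] (N = a₁+⋯+a_m) whose blocks A₁,...,A_m of sizes a₁,...,a_m satisfy p ≺ q exactly when p ∈ A_i, q ∈ A_j with i < j, the quantity I(a₁,...,a_m) := |Rel| − 2 Σ_{p ∉ Ext} min(D(P,p), U(P,p)) (where Rel is the set of strict relations) satisfies the recursion: I(a₁,a₂) = a₁a₂; and for m ≥ 3, I(a₁,...,a_m) = I(a₂,...,a_{m−1}) + a₁a_m if a₁ = a_m, I(a₁,...,a_m) = I(a₁−a_m, a₂,...,a_{m−1}) + a₁a_m if a₁ > a_m, and I(a₁,...,a_m) = I(a₂,...,a_m−a₁) + a₁a_m if a₁ < a_m. -/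
/-
`D(P,p)` and `U(P,p)` depend only on the block of `p`: they are the total sizes of the blocks
before and after it. So `|Rel| = Σᵢ aᵢ (aᵢ₊₁ + ⋯ + aₘ)`, and since `min (D, U)` already vanishes on
`Ext(P)`, the subtracted sum is `Σᵢ aᵢ min (a₁ + ⋯ + aᵢ₋₁, aᵢ₊₁ + ⋯ + aₘ)`. Removing the outer blocks
`a₁`, `aₘ` leaves the middle blocks weighted by `min (a₁ + prefix, suffix + aₘ)`; taking
`min (a₁, aₘ)` off both arguments lowers each minimum by that amount and leaves exactly the weights
of the reduced composition.
-/

noncomputable section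

/-- The chained poset `P(a₁,…,a_m)` given by the list `c = [a₁,…,a_m]`: the underlying set is the
disjoint union of consecutive blocks of sizes `a₁,…,a_m`. -/
abbrev ChainPoset (c : List ℕ) : Type := Σ i : Fin c.length, Fin (c.get i)

/-- The strict order relation on the chained poset: `p ≺ q` iff the block index of `p` is
strictly smaller than that of `q`. -/
def cplt {c : List ℕ} (p q : ChainPoset c) : Prop := p.1 < q.1

/-- `D(P,p) = #{q : q ≺ p}`. -/
def Dn (c : List ℕ) (p : ChainPoset c) : ℕ := Nat.card {q : ChainPoset c // cplt q p}

/-- `U(P,p) = #{q : p ≺ q}`. -/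
def Un (c : List ℕ) (p : ChainPoset c) : ℕ := Nat.card {q : ChainPoset c // cplt p q}

/-- The number of strict relations of the chained poset. -/
def RelN (c : List ℕ) : ℕ := Nat.card {x : ChainPoset c × ChainPoset c // cplt x.1 x.2}

/-- `p` is extremal (minimal or maximal). -/
def isExt (c : List ℕ) (p : ChainPoset c) : Prop :=
  (∀ q : ChainPoset c, ¬ cplt q p) ∨ (∀ q : ChainPoset c, ¬ cplt p q)

/-- The quantity `I(a₁,…,a_m) = |Rel| − 2 Σ_{p ∉ Ext} min(D(P,p), U(P,p))`. -/
def Iq (c : List ℕ) : ℤ :=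
  letI : ∀ p : ChainPoset c, Decidable (isExt c p) := fun _ => Classical.propDecidable _
  (RelN c : ℤ) - 2 * ∑ p : ChainPoset c, if isExt c p then 0 else (min (Dn c p) (Un c p) : ℤ)

lemma Nat.card_sigma_fin_subtype_fst {ι : Type*} [Fintype ι] (n : ι → ℕ) (S : ι → Prop)
    [DecidablePred S] : Nat.card {q : Σ i, Fin (n i) // S q.1} = ∑ i with S i, n i := by
  rw [Nat.card_congr (Equiv.subtypeSigmaEquiv _ S), Nat.card_sigma]
  simp only [Nat.card_eq_fintype_card, Fintype.card_fin]
  exact (Finset.sum_subtype _ (by simp) _).symm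

lemma sum_sigma_fin_fst {ι M : Type*} [Fintype ι] [AddCommMonoid M] (n : ι → ℕ) (f : ι → M) :
    ∑ p : Σ i, Fin (n i), f p.1 = ∑ i, n i • f i := by
  simp [Fintype.sum_sigma]

lemma List.sum_take_eq_sum_filter_lt (c : List ℕ) (k : ℕ) :
    (c.take k).sum = ∑ i : Fin c.length with i.val < k, c.get i := by
  conv_lhs => rw [← List.ofFn_get c]
  exact List.sum_take_ofFn _ _

lemma List.sum_drop_succ_eq_sum_filter_gt (c : List ℕ) (k : ℕ) :
    (c.drop (k + 1)).sum = ∑ i : Fin c.length with k < i.val, c.get i := by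
  have htot := List.sum_take_add_sum_drop c (k + 1)
  have hsplit := Finset.sum_filter_add_sum_filter_not Finset.univ
    (fun i : Fin c.length => i.val < k + 1) c.get
  simp only [not_lt, Nat.add_one_le_iff, List.get_eq_getElem, Fin.sum_univ_getElem] at hsplit
  rw [List.sum_take_eq_sum_filter_lt] at htot
  simp only [List.get_eq_getElem] at htot ⊢
  omega

lemma Dn_eq_sum_take (c : List ℕ) (p : ChainPoset c) : Dn c p = (c.take p.1).sum := by
  rw [List.sum_take_eq_sum_filter_lt]
  exact Nat.card_sigma_fin_subtype_fst (fun i => c.get i) (fun i => i.val < p.1.val)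

lemma Un_eq_sum_drop (c : List ℕ) (p : ChainPoset c) : Un c p = (c.drop (p.1 + 1)).sum := by
  rw [List.sum_drop_succ_eq_sum_filter_gt]
  exact Nat.card_sigma_fin_subtype_fst (fun i => c.get i) (fun i => p.1.val < i.val)

lemma min_Dn_Un_eq_zero_of_isExt {c : List ℕ} {p : ChainPoset c} (h : isExt c p) :
    min (Dn c p) (Un c p) = 0 := by
  rcases h with h | h
  · simp [Dn, h]
  · simp [Un, h]

def blockSum (F : ℕ → ℕ → ℕ) (c : List ℕ) : ℕ :=
  ∑ i : Fin c.length, c.get i * F (c.take i).sum (c.drop (i + 1)).sum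

section blockSum

variable (F : ℕ → ℕ → ℕ)

@[simp]
lemma blockSum_nil : blockSum F [] = 0 := rfl

lemma blockSum_cons (u : ℕ) (t : List ℕ) :
    blockSum F (u :: t) = u * F 0 t.sum + blockSum (fun p s => F (u + p) s) t := by
  simp [blockSum, Fin.sum_univ_succ]

lemma blockSum_append_singleton (L : List ℕ) (y : ℕ) :
    blockSum F (L ++ [y]) = blockSum (fun p s => F p (s + y)) L + y * F L.sum 0 := by
  induction L generalizing F with
  | nil => simp [blockSum_cons]
  | cons u t ih =>
    simp only [List.cons_append, blockSum_cons, List.sum_append, List.sum_cons, List.sum_nil,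
      add_zero, ih]
    ring

lemma blockSum_add_const (k : ℕ) (c : List ℕ) :
    blockSum (fun p s => F p s + k) c = blockSum F c + c.sum * k := by
  simp [blockSum, mul_add, Finset.sum_add_distrib, ← Finset.sum_mul, Fin.sum_univ_getElem]

end blockSum

lemma RelN_eq_blockSum (c : List ℕ) : RelN c = blockSum (fun _ s => s) c := by
  rw [RelN, Nat.card_congr (Equiv.subtypeProdEquivSigmaSubtype fun p q => cplt p q), Nat.card_sigma]
  calc ∑ p, Nat.card {q // cplt p q} = ∑ p : ChainPoset c, (c.drop (p.1 + 1)).sum :=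
        Finset.sum_congr rfl fun p _ => Un_eq_sum_drop c p
    _ = blockSum (fun _ s => s) c := by
        rw [sum_sigma_fin_fst (fun i => c.get i) fun i => (c.drop (i + 1)).sum]
        rfl

lemma sum_min_Dn_Un_eq_blockSum (c : List ℕ) :
    ∑ p, min (Dn c p) (Un c p) = blockSum min c := by
  simp_rw [Dn_eq_sum_take, Un_eq_sum_drop]
  rw [sum_sigma_fin_fst (fun i => c.get i) fun i => min (c.take i).sum (c.drop (i + 1)).sum]
  rfl

lemma Iq_eq_blockSum (c : List ℕ) : Iq c = blockSum (fun _ s => s) c - 2 * blockSum min c := by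
  rw [Iq, RelN_eq_blockSum, ← sum_min_Dn_Un_eq_blockSum]
  push_cast
  congr 2
  refine Finset.sum_congr rfl fun p _ => ?_
  split_ifs with h
  · exact_mod_cast (min_Dn_Un_eq_zero_of_isExt h).symm
  · rfl

lemma Iq_cons (z : ℕ) (L : List ℕ) :
    Iq (z :: L) = blockSum (fun _ s => s) L + z * L.sum
      - 2 * blockSum (fun p s => min (z + p) s) L := by
  rw [Iq_eq_blockSum, blockSum_cons, blockSum_cons]
  simp only [Nat.zero_min, mul_zero, zero_add]
  push_cast
  ring

lemma Iq_append_singleton (L : List ℕ) (z : ℕ) :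
    Iq (L ++ [z]) = blockSum (fun _ s => s) L + L.sum * z
      - 2 * blockSum (fun p s => min p (s + z)) L := by
  simp [Iq_eq_blockSum, blockSum_append_singleton, blockSum_add_const]

lemma Iq_cons_append_singleton (x y : ℕ) (L : List ℕ) :
    Iq (x :: L ++ [y]) = blockSum (fun _ s => s) L + (x + y) * L.sum + x * y
      - 2 * blockSum (fun p s => min (x + p) (s + y)) L := by
  simp only [List.cons_append, Iq_cons, blockSum_append_singleton, blockSum_add_const,
    List.sum_append, List.sum_singleton, Nat.min_zero, mul_zero, add_zero]
  push_cast
  ring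

theorem chain_index_recursion_general (x y : ℕ) (L : List ℕ) :
    Iq [x, y] = x * y ∧
    (L ≠ [] →
      (x = y → Iq (x :: L ++ [y]) = Iq L + x * y) ∧
      (y < x → Iq (x :: L ++ [y]) = Iq ((x - y) :: L) + x * y) ∧
      (x < y → Iq (x :: L ++ [y]) = Iq (L ++ [y - x]) + x * y)) := by
  refine ⟨by simpa using Iq_cons_append_singleton x y [], fun _ => ⟨?_, ?_, ?_⟩⟩
  · rintro rfl
    have hshift : (fun p s => min (x + p) (s + x)) = fun p s => min p s + x := by
      funext p s; omega
    rw [Iq_cons_append_singleton, hshift, blockSum_add_const, Iq_eq_blockSum]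
    push_cast
    ring
  · intro hyx
    have hshift : (fun p s => min (x + p) (s + y)) = fun p s => min (x - y + p) s + y := by
      funext p s; omega
    rw [Iq_cons_append_singleton, hshift, blockSum_add_const, Iq_cons]
    push_cast [hyx.le]
    ring
  · intro hxy
    have hshift : (fun p s => min (x + p) (s + y)) = fun p s => min p (s + (y - x)) + x := by
      funext p s; omega
    rw [Iq_cons_append_singleton, hshift, blockSum_add_const, Iq_append_singleton]
    push_cast [hxy.le]
    ring

/-- The recursion for `I(a₁,…,a_m)` (Lemma on the index of `g^≺(a₁,…,a_m)`):
`I(a₁,a₂) = a₁a₂`, and for `m ≥ 3` (i.e. nonempty middle list `L`),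
`I(a₁,…,a_m)` equals `I` of the reduced composition plus `a₁a_m`, according to whether
`a₁ = a_m`, `a₁ > a_m` or `a₁ < a_m`. -/
theorem chain_index_recursion (x y : ℕ) (L : List ℕ) (hx : 0 < x) (hy : 0 < y)
    (hL : ∀ n ∈ L, 0 < n) :
    Iq [x, y] = x * y ∧
    (L ≠ [] →
      (x = y → Iq (x :: L ++ [y]) = Iq L + x * y) ∧
      (y < x → Iq (x :: L ++ [y]) = Iq ((x - y) :: L) + x * y) ∧
      (x < y → Iq (x :: L ++ [y]) = Iq (L ++ [y - x]) + x * y)) :=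
  chain_index_recursion_general x y L
end
end

section
/- Let s be a seaweed subalgebra of gl(N,ℂ) determined by compositions a and b of N, and let λ₁ < ⋯ < λ_ℓ be the elements of PS(a) ∩ PS(b). Define an equivalence relation on [N] where i ∼ j iff i and j lie in the same interval among {1,...,λ₁}, {λ₁+1,...,λ₂}, ..., {λ_{ℓ−1}+1,...,λ_ℓ}. Then the center Z(s) of s equals the set of diagonal matrices Σᵢ cᵢ E_{i,i} in s such that cᵢ = cⱼ whenever i ∼ j. In particular, dim Z(s) = ℓ = |PS(a) ∩ PS(b)|. -/
noncomputable section

attribute [local instance 100] LieRing.ofAssociativeRing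

/-- The elementary matrix `E_{p,q}` in `gl(N,ℂ)`. -/
def Emat (N : ℕ) (p q : Fin N) : Matrix (Fin N) (Fin N) ℂ := Matrix.single p q 1

/-- The set of partial sums `PS(c) = {c₁+⋯+c_j : 1 ≤ j ≤ r}` of a composition `c`. -/
def PS (c : List ℕ) : Set ℕ := {k | ∃ j, 1 ≤ j ∧ j ≤ c.length ∧ k = (c.take j).sum}

/-- Positions `i` and `j` (0-indexed members of `[N]`) lie in a common consecutive block of the
composition `c`: no partial sum of `c` separates them. -/
def sameBlock (c : List ℕ) (i j : ℕ) : Prop :=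
  ∀ k ∈ PS c, ¬ (min i j < k ∧ k ≤ max i j)

/-- The spanning set of the seaweed algebra `p(a₁|⋯|a_n / b₁|⋯|b_m)`: all diagonal `E_{j,j}`,
all `E_{p,q}` with `p > q` in a common block of `a`, and all `E_{p,q}` with `p < q` in a common
block of `b`. -/
def seaweedSet (a b : List ℕ) (N : ℕ) : Set (Matrix (Fin N) (Fin N) ℂ) :=
  {M | ∃ j, M = Emat N j j} ∪
  {M | ∃ p q : Fin N, (q : ℕ) < p ∧ sameBlock a (p : ℕ) (q : ℕ) ∧ M = Emat N p q} ∪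
  {M | ∃ p q : Fin N, (p : ℕ) < q ∧ sameBlock b (p : ℕ) (q : ℕ) ∧ M = Emat N p q}

/-- The seaweed subalgebra `p(a / b)` of `gl(N,ℂ)`, spanned by `seaweedSet a b N`
(this set is closed under brackets, so the Lie span coincides with the linear span). -/
def seaweed (a b : List ℕ) (N : ℕ) : LieSubalgebra ℂ (Matrix (Fin N) (Fin N) ℂ) :=
  LieSubalgebra.lieSpan ℂ _ (seaweedSet a b N)

/-- The center `Z(s) = {x ∈ s : ⁅x,y⁆ = 0 for all y ∈ s}` of a Lie subalgebra, as a subspace of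
the ambient Lie algebra. -/
def centerSub {L : Type*} [LieRing L] [LieAlgebra ℂ L] (s : LieSubalgebra ℂ L) :
    Submodule ℂ L where
  carrier := {x | x ∈ s ∧ ∀ y ∈ s, ⁅x, y⁆ = 0}
  add_mem' := by
    rintro a b ⟨ha, ha2⟩ ⟨hb, hb2⟩
    exact ⟨add_mem ha hb, fun y hy => by rw [add_lie, ha2 y hy, hb2 y hy, add_zero]⟩
  zero_mem' := ⟨zero_mem _, fun y _ => by rw [zero_lie]⟩
  smul_mem' := by
    rintro c x ⟨hx, hx2⟩
    exact ⟨s.smul_mem c hx, fun y hy => by rw [smul_lie, hx2 y hy, smul_zero]⟩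

/-- Positions `i` and `j` (0-indexed) lie in the same central interval determined by the common
partial sums of `a` and `b`: no common partial sum separates them. -/
def central (a b : List ℕ) (i j : ℕ) : Prop :=
  ∀ t, t ∈ PS a → t ∈ PS b → ¬ (min i j < t ∧ t ≤ max i j)

/-!
An element `x` of the center commutes with every `E_{j,j}`, hence is diagonal. If `t + 1` is not
a common partial sum, then `E_{t+1,t}` or `E_{t,t+1}` lies in `s`, and commuting with it forces
`x_{t,t} = x_{t+1,t+1}`; chaining these equalities makes the diagonal constant on central
intervals. Conversely, the generators `E_{p,q}` of `s` are indexed by a transitive relation, so `s`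
consists of matrices supported on that relation; each such `(p, q)` lies in one central interval,
where a diagonal matrix of the stated form is scalar. Labelling every central interval by its right
end point matches the intervals with `PS(a) ∩ PS(b)`, which gives the dimension.
-/

open Function Matrix

/-- `sameBlock c` is `Unseparated (PS c)`, and `central a b` is `Unseparated (PS a ∩ PS b)`. -/
def Unseparated (S : Set ℕ) (i j : ℕ) : Prop :=
  ∀ k ∈ S, ¬ (min i j < k ∧ k ≤ max i j)

theorem Unseparated.symm {S : Set ℕ} {i j : ℕ} (h : Unseparated S i j) : Unseparated S j i :=
  fun k hk hij => h k hk (by omega)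

theorem Unseparated.apply_eq_of_succ {α : Type*} {S : Set ℕ} {N : ℕ} {f : Fin N → α}
    (hf : ∀ i j : Fin N, (j : ℕ) = i + 1 → Unseparated S i j → f i = f j)
    {i j : Fin N} (h : Unseparated S i j) : f i = f j := by
  suffices key : ∀ n (i j : Fin N), (j : ℕ) = i + n → Unseparated S i j → f i = f j by
    rcases le_total (i : ℕ) j with hij | hij
    · exact key (j - i) i j (by omega) h
    · exact (key (i - j) j i (by omega) h.symm).symm
  intro n
  induction n with
  | zero => exact fun i j hij _ => congrArg f (Fin.ext hij.symm)
  | succ n ih =>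
    intro i j hij h
    let k : Fin N := ⟨i + n, by omega⟩
    exact (ih i k rfl fun t ht hc => h t ht (by simp only [k] at hc; omega)).trans
      (hf k j hij fun t ht hc => h t ht (by simp only [k] at hc; omega))

/-- `SeaweedRel (PS a) (PS b) p q` says that `E_{p,q}` is a generator of `p(a / b)` (diagonal
ones included). -/
def SeaweedRel (A B : Set ℕ) (p q : ℕ) : Prop :=
  (q < p → Unseparated A p q) ∧ (p < q → Unseparated B p q)

namespace SeaweedRel

variable {A B : Set ℕ} {p q r : ℕ}

theorem trans (h₁ : SeaweedRel A B p r) (h₂ : SeaweedRel A B r q) : SeaweedRel A B p q := by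
  refine ⟨fun _ k hk => ?_, fun _ k hk => ?_⟩
  · have := fun h => h₁.1 h k hk
    have := fun h => h₂.1 h k hk
    omega
  · have := fun h => h₁.2 h k hk
    have := fun h => h₂.2 h k hk
    omega

theorem unseparated_inter (h : SeaweedRel A B p q) : Unseparated (A ∩ B) p q := by
  intro k hk
  have := fun h' => h.1 h' k hk.1
  have := fun h' => h.2 h' k hk.2
  omega

theorem succ_or_of_unseparated_inter {i : ℕ} (h : Unseparated (A ∩ B) i (i + 1)) :
    SeaweedRel A B (i + 1) i ∨ SeaweedRel A B i (i + 1) := by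
  by_cases hA : i + 1 ∈ A
  · refine Or.inr ⟨by omega, fun _ k hk hik => ?_⟩
    obtain rfl : k = i + 1 := by omega
    exact h _ ⟨hA, hk⟩ hik
  · refine Or.inl ⟨fun _ k hk hik => ?_, by omega⟩
    obtain rfl : k = i + 1 := by omega
    exact hA hk

end SeaweedRel

namespace Matrix

variable {ι K : Type*} [CommRing K]

theorem mul_apply_eq_zero_of_trans [Fintype ι] {R : ι → ι → Prop}
    (hR : ∀ ⦃p r q⦄, R p r → R r q → R p q) {x y : Matrix ι ι K}
    (hx : ∀ p q, ¬ R p q → x p q = 0) (hy : ∀ p q, ¬ R p q → y p q = 0)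
    {p q : ι} (hpq : ¬ R p q) : (x * y) p q = 0 := by
  refine (mul_apply ..).trans (Finset.sum_eq_zero fun r _ => ?_)
  by_cases hpr : R p r
  · rw [hy r q fun hrq => hpq (hR hpr hrq), mul_zero]
  · rw [hx p r hpr, zero_mul]

variable [DecidableEq ι]

theorem mem_range_diagonalLinearMap_comp_funLeft_iff {κ : Type*} {τ : ι → κ}
    (hτ : Surjective τ) {x : Matrix ι ι K} :
    x ∈ LinearMap.range (diagonalLinearMap ι K K ∘ₗ LinearMap.funLeft K K τ) ↔
      (∀ i j, i ≠ j → x i j = 0) ∧ ∀ i j, τ i = τ j → x i i = x j j := by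
  constructor
  · rintro ⟨g, rfl⟩
    exact ⟨fun i j hij => diagonal_apply_ne _ hij, fun i j hij => by simp [hij]⟩
  · rintro ⟨hdiag, hconst⟩
    refine ⟨fun k => x (surjInv hτ k) (surjInv hτ k), ?_⟩
    refine .trans ?_ ((isDiag_iff_diagonal_diag x).mp fun i j hij => hdiag i j hij)
    exact congrArg diagonal (funext fun i => hconst _ _ (surjInv_eq hτ (τ i)))

variable [Fintype ι]

def supportLieSubalgebra (R : ι → ι → Prop) (hR : ∀ ⦃p r q⦄, R p r → R r q → R p q) :
    LieSubalgebra K (Matrix ι ι K) where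
  carrier := {x | ∀ p q, ¬ R p q → x p q = 0}
  add_mem' hx hy p q hpq := by rw [add_apply, hx p q hpq, hy p q hpq, add_zero]
  zero_mem' _ _ _ := rfl
  smul_mem' c _ hx p q hpq := by rw [smul_apply, hx p q hpq, smul_zero]
  lie_mem' hx hy p q hpq := by
    rw [Ring.lie_def, Matrix.sub_apply, mul_apply_eq_zero_of_trans hR hx hy hpq,
      mul_apply_eq_zero_of_trans hR hy hx hpq, sub_zero]

theorem single_mem_supportLieSubalgebra {R : ι → ι → Prop}
    {hR : ∀ ⦃p r q⦄, R p r → R r q → R p q} {p q : ι} (h : R p q) :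
    single p q (1 : K) ∈ supportLieSubalgebra R hR :=
  fun _ _ hrs => single_apply_of_ne _ _ _ _ _ (by rintro ⟨rfl, rfl⟩; exact hrs h)

theorem lie_single_apply_same (x : Matrix ι ι K) (p q : ι) :
    ⁅x, single p q 1⁆ p q = x p p - x q q := by
  rw [Ring.lie_def, Matrix.sub_apply, mul_single_apply_same, single_mul_apply_same, mul_one,
    one_mul]

theorem lie_single_apply_of_ne (x : Matrix ι ι K) {i j : ι} (hij : i ≠ j) :
    ⁅x, single j j 1⁆ i j = x i j := by
  rw [Ring.lie_def, Matrix.sub_apply, mul_single_apply_same, single_mul_apply_of_ne (h := hij),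
    mul_one, sub_zero]

theorem lie_diagonal_apply (d : ι → K) (y : Matrix ι ι K) (p q : ι) :
    ⁅diagonal d, y⁆ p q = (d p - d q) * y p q := by
  rw [Ring.lie_def, Matrix.sub_apply, diagonal_mul, mul_diagonal]
  ring

end Matrix

theorem PS_subset_Icc {c : List ℕ} {N : ℕ} (hs : c.sum = N) (hp : ∀ n ∈ c, 0 < n) :
    PS c ⊆ Set.Icc 1 N := by
  rintro _ ⟨j, hj, hjc, rfl⟩
  refine ⟨?_, hs ▸ (List.take_sublist j c).sum_le_sum fun _ _ => Nat.zero_le _⟩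
  obtain ⟨n, l, rfl⟩ := List.exists_cons_of_length_pos (by omega : 0 < c.length)
  obtain ⟨j, rfl⟩ := Nat.exists_eq_add_of_le' hj
  have := hp n List.mem_cons_self
  simp only [List.take_succ_cons, List.sum_cons]
  omega

theorem mem_PS_of_sum_eq {c : List ℕ} {N : ℕ} (hs : c.sum = N) (hN : 0 < N) : N ∈ PS c := by
  have hc : c ≠ [] := by rintro rfl; simp at hs; omega
  exact ⟨c.length, List.length_pos_iff.mpr hc, le_rfl, by rw [List.take_length, hs]⟩

/-- The least element of `S` beyond `i` (`0` if there is none). -/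
def nextIn (S : Set ℕ) (i : ℕ) : ℕ := sInf {t | t ∈ S ∧ i < t}

section nextIn

variable {S : Set ℕ} {i j t : ℕ}

theorem nextIn_mem_and_lt (h : ∃ t ∈ S, i < t) : nextIn S i ∈ S ∧ i < nextIn S i :=
  Nat.sInf_mem (s := {t | t ∈ S ∧ i < t}) h

theorem nextIn_le (ht : t ∈ S) (hit : i < t) : nextIn S i ≤ t :=
  Nat.sInf_le ⟨ht, hit⟩

theorem nextIn_pred (ht : t ∈ S) (h0 : 0 < t) : nextIn S (t - 1) = t := by
  have := (nextIn_mem_and_lt (i := t - 1) ⟨t, ht, by omega⟩).2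
  have := nextIn_le ht (by omega : t - 1 < t)
  omega

theorem unseparated_iff_nextIn_eq (hi : ∃ t ∈ S, i < t) (hj : ∃ t ∈ S, j < t) :
    Unseparated S i j ↔ nextIn S i = nextIn S j := by
  obtain ⟨hiS, hi⟩ := nextIn_mem_and_lt hi
  obtain ⟨hjS, hj⟩ := nextIn_mem_and_lt hj
  constructor
  · intro h
    have := h _ hiS
    have := h _ hjS
    have := nextIn_le hiS (i := j)
    have := nextIn_le hjS (i := i)
    omega
  · intro h k hk
    have := nextIn_le hk (i := i)
    have := nextIn_le hk (i := j)
    omega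

theorem exists_surjective_unseparated_iff {N : ℕ} (hS : S ⊆ Set.Icc 1 N) (hN : 0 < N → N ∈ S) :
    ∃ τ : Fin N → S, Surjective τ ∧ ∀ i j : Fin N, Unseparated S i j ↔ τ i = τ j := by
  have hnext (i : Fin N) : ∃ t ∈ S, (i : ℕ) < t := ⟨N, hN i.pos, i.isLt⟩
  refine ⟨fun i => ⟨nextIn S i, (nextIn_mem_and_lt (hnext i)).1⟩, fun t => ?_, fun i j => ?_⟩
  · obtain ⟨ht₁, htN⟩ := hS t.2
    exact ⟨⟨t - 1, by omega⟩, Subtype.ext (nextIn_pred t.2 (by omega))⟩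
  · rw [unseparated_iff_nextIn_eq (hnext i) (hnext j), Subtype.ext_iff]

end nextIn

section Seaweed

variable {a b : List ℕ} {N : ℕ}

theorem central_iff_unseparated {i j : ℕ} : central a b i j ↔ Unseparated (PS a ∩ PS b) i j :=
  ⟨fun h t ht => h t ht.1 ht.2, fun h t ha hb => h t ⟨ha, hb⟩⟩

theorem exists_seaweedRel_of_mem_seaweedSet {M : Matrix (Fin N) (Fin N) ℂ}
    (hM : M ∈ seaweedSet a b N) :
    ∃ p q : Fin N, SeaweedRel (PS a) (PS b) p q ∧ M = Emat N p q := by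
  rcases hM with (⟨j, rfl⟩ | ⟨p, q, hqp, hpq, rfl⟩) | ⟨p, q, hpq, hpq', rfl⟩
  · exact ⟨j, j, ⟨by omega, by omega⟩, rfl⟩
  · exact ⟨p, q, ⟨fun _ => hpq, by omega⟩, rfl⟩
  · exact ⟨p, q, ⟨by omega, fun _ => hpq'⟩, rfl⟩

theorem single_mem_seaweed {p q : Fin N} (h : SeaweedRel (PS a) (PS b) p q) :
    Emat N p q ∈ seaweed a b N := by
  apply LieSubalgebra.subset_lieSpan
  rcases lt_trichotomy (p : ℕ) q with hpq | hpq | hpq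
  · exact Or.inr ⟨p, q, hpq, h.2 hpq, rfl⟩
  · exact Or.inl (Or.inl ⟨p, by rw [Fin.ext hpq]⟩)
  · exact Or.inl (Or.inr ⟨p, q, hpq, h.1 hpq, rfl⟩)

theorem diagonal_mem_seaweed (d : Fin N → ℂ) : diagonal d ∈ seaweed a b N := by
  rw [← sum_single_eq_diagonal]
  refine sum_mem fun i _ => ?_
  rw [← mul_one (d i), ← smul_eq_mul, ← smul_single]
  exact LieSubalgebra.smul_mem _ _ (single_mem_seaweed ⟨by omega, by omega⟩)

theorem seaweed_le_supportLieSubalgebra :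
    seaweed a b N ≤ supportLieSubalgebra (fun p q : Fin N => SeaweedRel (PS a) (PS b) p q)
      fun _ _ _ => SeaweedRel.trans :=
  LieSubalgebra.lieSpan_le.mpr fun _ hM => by
    obtain ⟨p, q, h, rfl⟩ := exists_seaweedRel_of_mem_seaweedSet hM
    exact single_mem_supportLieSubalgebra h

theorem apply_eq_zero_of_forall_lie_eq_zero {x : Matrix (Fin N) (Fin N) ℂ}
    (hx : ∀ y ∈ seaweed a b N, ⁅x, y⁆ = 0) {i j : Fin N} (hij : i ≠ j) : x i j = 0 := by
  have := congr_fun₂ (hx _ (single_mem_seaweed (p := j) (q := j) ⟨by omega, by omega⟩)) i j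
  rwa [Emat, lie_single_apply_of_ne x hij] at this

theorem apply_self_eq_of_seaweedRel {x : Matrix (Fin N) (Fin N) ℂ}
    (hx : ∀ y ∈ seaweed a b N, ⁅x, y⁆ = 0) {p q : Fin N} (h : SeaweedRel (PS a) (PS b) p q) :
    x p p = x q q := by
  have := congr_fun₂ (hx _ (single_mem_seaweed h)) p q
  rw [Emat, lie_single_apply_same] at this
  exact sub_eq_zero.mp this

theorem apply_self_eq_of_central {x : Matrix (Fin N) (Fin N) ℂ}
    (hx : ∀ y ∈ seaweed a b N, ⁅x, y⁆ = 0) {i j : Fin N} (h : central a b i j) :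
    x i i = x j j := by
  refine Unseparated.apply_eq_of_succ (f := fun i => x i i) (fun i j hij hsep => ?_)
    (central_iff_unseparated.mp h)
  rw [hij] at hsep
  rcases SeaweedRel.succ_or_of_unseparated_inter hsep with hji | hij'
  · exact (apply_self_eq_of_seaweedRel hx (p := j) (q := i) (hij ▸ hji)).symm
  · exact apply_self_eq_of_seaweedRel hx (hij ▸ hij')

theorem seaweed_center_eq (a b : List ℕ) (N : ℕ) :
    {x : Matrix (Fin N) (Fin N) ℂ | x ∈ seaweed a b N ∧ ∀ y ∈ seaweed a b N, ⁅x, y⁆ = 0} =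
      {x : Matrix (Fin N) (Fin N) ℂ | (∀ i j : Fin N, i ≠ j → x i j = 0) ∧
        ∀ i j : Fin N, central a b (i : ℕ) (j : ℕ) → x i i = x j j} := by
  ext x
  refine ⟨fun ⟨_, hx⟩ => ⟨fun i j => apply_eq_zero_of_forall_lie_eq_zero hx,
    fun i j => apply_self_eq_of_central hx⟩, fun ⟨hdiag, hconst⟩ => ?_⟩
  rw [Set.mem_ofPred_eq, ← (isDiag_iff_diagonal_diag x).mp fun i j hij => hdiag i j hij]
  refine ⟨diagonal_mem_seaweed _, fun y hy => ext fun p q => ?_⟩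
  rw [lie_diagonal_apply, Matrix.zero_apply]
  by_cases hpq : SeaweedRel (PS a) (PS b) p q
  · rw [Matrix.diag_apply, Matrix.diag_apply,
      hconst p q (central_iff_unseparated.mpr hpq.unseparated_inter), sub_self, zero_mul]
  · rw [seaweed_le_supportLieSubalgebra hy p q hpq, mul_zero]

end Seaweed

theorem seaweed_center_general (a b : List ℕ) (N : ℕ)
    (hsa : a.sum = N) (hsb : b.sum = N)
    (hpa : ∀ n ∈ a, 0 < n) :
    ({x : Matrix (Fin N) (Fin N) ℂ | x ∈ seaweed a b N ∧ ∀ y ∈ seaweed a b N, ⁅x, y⁆ = 0} =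
      {x : Matrix (Fin N) (Fin N) ℂ | (∀ i j : Fin N, i ≠ j → x i j = 0) ∧
        ∀ i j : Fin N, central a b (i : ℕ) (j : ℕ) → x i i = x j j}) ∧
    Module.finrank ℂ (centerSub (seaweed a b N)) = (PS a ∩ PS b).ncard := by
  refine ⟨seaweed_center_eq a b N, ?_⟩
  have hT : PS a ∩ PS b ⊆ Set.Icc 1 N := Set.inter_subset_left.trans (PS_subset_Icc hsa hpa)
  have : Fintype ↥(PS a ∩ PS b) := ((Set.finite_Icc 1 N).subset hT).fintype
  obtain ⟨τ, hτ, hsep⟩ := exists_surjective_unseparated_iff hT fun hN =>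
    ⟨mem_PS_of_sum_eq hsa hN, mem_PS_of_sum_eq hsb hN⟩
  have hcenter : centerSub (seaweed a b N) =
      LinearMap.range (diagonalLinearMap (Fin N) ℂ ℂ ∘ₗ LinearMap.funLeft ℂ ℂ τ) := by
    ext x
    have hx := Set.ext_iff.mp (seaweed_center_eq a b N) x
    simp only [Set.mem_ofPred_eq, central_iff_unseparated, hsep] at hx
    exact hx.trans (mem_range_diagonalLinearMap_comp_funLeft_iff hτ).symm
  rw [hcenter, LinearMap.finrank_range_of_inj
      (diagonal_injective.comp (LinearMap.funLeft_injective_of_surjective ℂ ℂ τ hτ)),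
    Module.finrank_fintype_fun_eq_card, ← Nat.card_eq_fintype_card, Nat.card_coe_set_eq]

/-- The center of a seaweed algebra `s` consists exactly of the diagonal matrices whose diagonal
entries are constant on each central interval; in particular its dimension is
`|PS(a) ∩ PS(b)|`. -/
theorem seaweed_center (a b : List ℕ) (N : ℕ)
    (hsa : a.sum = N) (hsb : b.sum = N)
    (hpa : ∀ n ∈ a, 0 < n) (hpb : ∀ n ∈ b, 0 < n) :
    ({x : Matrix (Fin N) (Fin N) ℂ | x ∈ seaweed a b N ∧ ∀ y ∈ seaweed a b N, ⁅x, y⁆ = 0} =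
      {x : Matrix (Fin N) (Fin N) ℂ | (∀ i j : Fin N, i ≠ j → x i j = 0) ∧
        ∀ i j : Fin N, central a b (i : ℕ) (j : ℕ) → x i i = x j j}) ∧
    Module.finrank ℂ (centerSub (seaweed a b N)) = (PS a ∩ PS b).ncard :=
  seaweed_center_general a b N hsa hsb hpa
end
end

section
/- Let s be a seaweed subalgebra of gl(N,ℂ) with N ≥ 2 given by compositions a and b of N. If x = Σ c_{i,j} E_{i,j} lies in the nilradical n(s) of s, and p ≠ q are indices with both E_{p,q} ∈ s and E_{q,p} ∈ s, then c_{p,q} = c_{q,p} = 0. -/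
noncomputable section

attribute [local instance 100] LieRing.ofAssociativeRing

/-- The span of all brackets `⁅x,y⁆` with `x ∈ A`, `y ∈ B`. -/
def bracketSpan {L : Type*} [LieRing L] [LieAlgebra ℂ L] (A B : Submodule ℂ L) :
    Submodule ℂ L :=
  Submodule.span ℂ {m | ∃ x ∈ A, ∃ y ∈ B, m = ⁅x, y⁆}

/-- The lower central series of a subspace `A`: `A₀ = A`, `A_{k+1} = ⁅A, A_k⁆`. -/
def lcsS {L : Type*} [LieRing L] [LieAlgebra ℂ L] (A : Submodule ℂ L) : ℕ → Submodule ℂ L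
  | 0 => A
  | k + 1 => bracketSpan A (lcsS A k)

/-- The nilradical of a Lie subalgebra `s`: the largest nilpotent ideal of `s`, realized as the
supremum of all nilpotent ideals of `s`. -/
def nilrad {L : Type*} [LieRing L] [LieAlgebra ℂ L] (s : LieSubalgebra ℂ L) : Submodule ℂ L :=
  sSup {I : Submodule ℂ L |
    I ≤ s.toSubmodule ∧ (∀ x ∈ s, ∀ y ∈ I, ⁅x, y⁆ ∈ I) ∧ ∃ k, lcsS I k = ⊥}

/-!
Only the two root vectors `E_{pq}, E_{qp} ∈ s` matter. Since `E_{qp}² = 0`,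
`ad(E_{qp})² y = -2 y_{pq} E_{qp}`, so an ideal `I` of `s` containing `y` with `y_{pq} ≠ 0`
contains `E_{qp}`, hence also `h = ⁅E_{pq}, E_{qp}⁆`. As `⁅h, E_{qp}⁆ = -2 E_{qp}`, the vector
`E_{qp}` survives in every term of the lower central series of `I`, so `I` is not nilpotent.
-/

namespace Matrix

variable {n R : Type*} [Fintype n] [DecidableEq n] [CommRing R]

theorem lie_single_single_swap (p q : n) :
    ⁅single p q (1 : R), single q p (1 : R)⁆ = single p p 1 - single q q 1 := by
  simp [Ring.lie_def]

theorem lie_sub_single_single_single {p q : n} (hpq : p ≠ q) :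
    ⁅single p p (1 : R) - single q q 1, single q p (1 : R)⁆ = (-2 : R) • single q p 1 := by
  simp only [Ring.lie_def, sub_mul, mul_sub, single_mul_single_same, mul_one,
    single_mul_single_of_ne _ _ _ _ hpq, zero_sub]
  module

theorem lie_single_lie_single {p q : n} (hpq : p ≠ q) (y : Matrix n n R) :
    ⁅single q p (1 : R), ⁅single q p (1 : R), y⁆⁆ = (-2 * y p q) • single q p 1 := by
  have hsq : single q p (1 : R) * single q p 1 = 0 := single_mul_single_of_ne _ _ _ _ hpq _
  have hmid : single q p (1 : R) * y * single q p 1 = y p q • single q p 1 := by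
    simp [smul_single]
  simp only [Ring.lie_def, mul_sub, sub_mul, ← mul_assoc, mul_assoc y, hsq, zero_mul, mul_zero,
    hmid]
  module

end Matrix

section LowerCentralSeries

variable {L : Type*} [LieRing L] [LieAlgebra ℂ L] {I : Submodule ℂ L} {h e : L} {c : ℂ}

theorem mem_lcsS_of_lie_eq_smul (hh : h ∈ I) (he : e ∈ I) (hhe : ⁅h, e⁆ = c • e) (hc : c ≠ 0)
    (k : ℕ) : e ∈ lcsS I k := by
  induction k with
  | zero => exact he
  | succ k ih =>
    have he_eq : e = ⁅c⁻¹ • h, e⁆ := by rw [smul_lie, hhe, smul_smul, inv_mul_cancel₀ hc, one_smul]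
    exact Submodule.subset_span ⟨_, I.smul_mem _ hh, _, ih, he_eq⟩

theorem eq_zero_of_lie_eq_smul_of_lcsS_eq_bot (hh : h ∈ I) (he : e ∈ I) (hhe : ⁅h, e⁆ = c • e)
    (hc : c ≠ 0) {k : ℕ} (hk : lcsS I k = ⊥) : e = 0 := by
  simpa [hk] using mem_lcsS_of_lie_eq_smul hh he hhe hc k

end LowerCentralSeries

namespace Matrix

variable {n : Type*} [Fintype n] [DecidableEq n] {s : LieSubalgebra ℂ (Matrix n n ℂ)} {p q : n}

theorem apply_eq_zero_of_mem_of_lcsS_eq_bot (hpq : p ≠ q) (hp : single p q 1 ∈ s)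
    (hq : single q p 1 ∈ s) {I : Submodule ℂ (Matrix n n ℂ)} (hI : ∀ x ∈ s, ∀ y ∈ I, ⁅x, y⁆ ∈ I)
    {k : ℕ} (hk : lcsS I k = ⊥) {y : Matrix n n ℂ} (hy : y ∈ I) : y p q = 0 := by
  by_contra hne
  have he : single q p (1 : ℂ) ∈ I := by
    have hcoeff : (-2 * y p q : ℂ) ≠ 0 := mul_ne_zero (by norm_num) hne
    rw [← inv_smul_smul₀ hcoeff (single q p (1 : ℂ)), ← lie_single_lie_single hpq]
    exact I.smul_mem _ (hI _ hq _ (hI _ hq _ hy))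
  have hh : single p p (1 : ℂ) - single q q 1 ∈ I := lie_single_single_swap (R := ℂ) p q ▸ hI _ hp _ he
  have he0 := eq_zero_of_lie_eq_smul_of_lcsS_eq_bot hh he (lie_sub_single_single_single hpq)
    (by norm_num) hk
  simpa using congrFun (congrFun he0 q) p

theorem apply_eq_zero_of_mem_nilrad (hpq : p ≠ q) (hp : single p q 1 ∈ s)
    (hq : single q p 1 ∈ s) {x : Matrix n n ℂ} (hx : x ∈ nilrad s) : x p q = 0 := by
  have hle : nilrad s ≤ LinearMap.ker (entryLinearMap ℂ ℂ p q) :=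
    sSup_le fun I ⟨_, hI, _, hk⟩ y hy => apply_eq_zero_of_mem_of_lcsS_eq_bot hpq hp hq hI hk hy
  exact hle hx

end Matrix

theorem nilradical_entries_vanish_general (a b : List ℕ) (N : ℕ)
    (x : Matrix (Fin N) (Fin N) ℂ) (hx : x ∈ nilrad (seaweed a b N))
    (p q : Fin N) (hpq : p ≠ q)
    (hp : Emat N p q ∈ seaweed a b N) (hq : Emat N q p ∈ seaweed a b N) :
    x p q = 0 ∧ x q p = 0 :=
  ⟨Matrix.apply_eq_zero_of_mem_nilrad hpq hp hq hx,
    Matrix.apply_eq_zero_of_mem_nilrad hpq.symm hq hp hx⟩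

/-- If `x` lies in the nilradical of a seaweed algebra `s ⊆ gl(N,ℂ)`, `N ≥ 2`, and `p ≠ q` are
indices with both `E_{p,q} ∈ s` and `E_{q,p} ∈ s`, then the `(p,q)` and `(q,p)` entries of `x`
vanish. -/
theorem nilradical_entries_vanish (a b : List ℕ) (N : ℕ) (hN : 2 ≤ N)
    (hsa : a.sum = N) (hsb : b.sum = N)
    (hpa : ∀ n ∈ a, 0 < n) (hpb : ∀ n ∈ b, 0 < n)
    (x : Matrix (Fin N) (Fin N) ℂ) (hx : x ∈ nilrad (seaweed a b N))
    (p q : Fin N) (hpq : p ≠ q)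
    (hp : Emat N p q ∈ seaweed a b N) (hq : Emat N q p ∈ seaweed a b N) :
    x p q = 0 ∧ x q p = 0 :=
  nilradical_entries_vanish_general a b N x hx p q hpq hp hq
end
end
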